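/- arXiv:cs/0511039 — 5 statements merged into one kernel-verified Lean document; each statement's English description precedes it below -/
import Mathlib

section
/- Let X be a random variable taking values in {+1, −1} on a probability space, and let Y and Z be random variables (with values in standard Borel spaces) such that X → Y → Z forms a Markov chain, i.e., X and Z are conditionally independent given Y. Let K > 0 and let k : [0, 1] → ℝ be twice differentiable with k'(0) ≤ 0 and k''(x) ≤ −K for all x ∈ [0, 1]. Denote μ_Y = E[X | Y] and μ_Z = E[X | Z] (conditional expectations). Then E[k(|μ_Y|)] ≤ E[k(|μ_Z|)] − (K/2) · E[|μ_Y − μ_Z|²]. -/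
open MeasureTheory ProbabilityTheory

section Aux

open Set

private lemma gexit_taylor2 {K : ℝ} {k k' k'' : ℝ → ℝ}
    (hk' : ∀ x ∈ Icc (0 : ℝ) 1, HasDerivAt k (k' x) x)
    (hk'' : ∀ x ∈ Icc (0 : ℝ) 1, HasDerivAt k' (k'' x) x)
    (hK'' : ∀ x ∈ Icc (0 : ℝ) 1, k'' x ≤ -K)
    {x y : ℝ} (hx : x ∈ Icc (0:ℝ) 1) (hy : y ∈ Icc (0:ℝ) 1) :
    k y ≤ k x + k' x * (y - x) - K / 2 * (y - x) ^ 2 := by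
  set F : ℝ → ℝ := fun t => k t + k' t * (y - t) - K / 2 * (y - t) ^ 2 with hF
  have hFd : ∀ t ∈ Icc (0:ℝ) 1, HasDerivAt F ((k'' t + K) * (y - t)) t := by
    intro t ht
    have h1 : HasDerivAt (fun t => y - t) (-1) t := by
      simpa using (hasDerivAt_id t).const_sub y
    have h2 : HasDerivAt (fun t => k' t * (y - t)) (k'' t * (y - t) + k' t * (-1)) t :=
      (hk'' t ht).mul h1
    have h3 : HasDerivAt (fun t => K / 2 * (y - t) ^ 2) (K / 2 * (2 * (y - t) ^ 1 * (-1))) t :=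
      (h1.pow 2).const_mul (K / 2)
    have : HasDerivAt F (k' t + (k'' t * (y - t) + k' t * -1) - K / 2 * (2 * (y - t) ^ 1 * -1)) t :=
      ((hk' t ht).add h2).sub h3
    convert this using 1
    ring
  have hsub : ∀ a b : ℝ, a ∈ Icc (0:ℝ) 1 → b ∈ Icc (0:ℝ) 1 → Icc a b ⊆ Icc (0:ℝ) 1 := by
    intro a b ha hb
    exact Icc_subset_Icc ha.1 hb.2
  have hcont : ∀ a b : ℝ, a ∈ Icc (0:ℝ) 1 → b ∈ Icc (0:ℝ) 1 → ContinuousOn F (Icc a b) := by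
    intro a b ha hb
    intro t ht
    exact ((hFd t (hsub a b ha hb ht)).continuousAt).continuousWithinAt
  rcases le_total x y with hxy | hxy
  · have hanti : AntitoneOn F (Icc x y) := by
      refine antitoneOn_of_deriv_nonpos (convex_Icc x y) (hcont x y hx hy) ?_ ?_
      · intro t ht
        rw [interior_Icc] at ht
        exact ((hFd t (hsub x y hx hy
          (Ioo_subset_Icc_self ht))).differentiableAt).differentiableWithinAt
      · intro t ht
        rw [interior_Icc] at ht
        have htI : t ∈ Icc (0:ℝ) 1 := hsub x y hx hy (Ioo_subset_Icc_self ht)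
        rw [(hFd t htI).deriv]
        have h1 : k'' t + K ≤ 0 := by linarith [hK'' t htI]
        have h2 : 0 ≤ y - t := by linarith [ht.2]
        nlinarith
    have := hanti (left_mem_Icc.2 hxy) (right_mem_Icc.2 hxy) hxy
    simpa [hF] using this
  · have hmono : MonotoneOn F (Icc y x) := by
      refine monotoneOn_of_deriv_nonneg (convex_Icc y x) (hcont y x hy hx) ?_ ?_
      · intro t ht
        rw [interior_Icc] at ht
        exact ((hFd t (hsub y x hy hx
          (Ioo_subset_Icc_self ht))).differentiableAt).differentiableWithinAt
      · intro t ht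
        rw [interior_Icc] at ht
        have htI : t ∈ Icc (0:ℝ) 1 := hsub y x hy hx (Ioo_subset_Icc_self ht)
        rw [(hFd t htI).deriv]
        have h1 : k'' t + K ≤ 0 := by linarith [hK'' t htI]
        have h2 : y - t ≤ 0 := by linarith [ht.1]
        nlinarith
    have := hmono (left_mem_Icc.2 hxy) (right_mem_Icc.2 hxy) hxy
    simpa [hF] using this

private lemma gexit_deriv_bound {K : ℝ} {k' k'' : ℝ → ℝ}
    (hk'' : ∀ x ∈ Icc (0 : ℝ) 1, HasDerivAt k' (k'' x) x)
    (hK'' : ∀ x ∈ Icc (0 : ℝ) 1, k'' x ≤ -K)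
    {b : ℝ} (hb : b ∈ Icc (0:ℝ) 1) : k' b + K * b ≤ k' 0 := by
  set G : ℝ → ℝ := fun t => k' t + K * t with hG
  have hGd : ∀ t ∈ Icc (0:ℝ) 1, HasDerivAt G (k'' t + K) t := by
    intro t ht
    have h1 : HasDerivAt (fun t : ℝ => K * t) K t := by
      simpa using (hasDerivAt_id t).const_mul K
    exact (hk'' t ht).add h1
  have hanti : AntitoneOn G (Icc (0:ℝ) 1) := by
    refine antitoneOn_of_deriv_nonpos (convex_Icc 0 1) ?_ ?_ ?_
    · exact fun t ht => ((hGd t ht).continuousAt).continuousWithinAt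
    · intro t ht
      rw [interior_Icc] at ht
      exact ((hGd t (Ioo_subset_Icc_self ht)).differentiableAt).differentiableWithinAt
    · intro t ht
      rw [interior_Icc] at ht
      rw [(hGd t (Ioo_subset_Icc_self ht)).deriv]
      linarith [hK'' t (Ioo_subset_Icc_self ht)]
  have := hanti (left_mem_Icc.2 (by norm_num)) hb hb.1
  simpa [hG] using this

private lemma gexit_pointwise {K : ℝ} (hK : 0 < K) {k k' k'' : ℝ → ℝ}
    (hk' : ∀ x ∈ Icc (0 : ℝ) 1, HasDerivAt k (k' x) x)
    (hk'' : ∀ x ∈ Icc (0 : ℝ) 1, HasDerivAt k' (k'' x) x)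
    (hk'0 : k' 0 ≤ 0)
    (hK'' : ∀ x ∈ Icc (0 : ℝ) 1, k'' x ≤ -K)
    {a b : ℝ} (ha : a ∈ Icc (-1:ℝ) 1) (hb : b ∈ Icc (-1:ℝ) 1) :
    k |a| ≤ k |b| + (Real.sign b * k' |b|) * (a - b) - K / 2 * (a - b) ^ 2 := by
  have aux : ∀ a b : ℝ, a ∈ Icc (-1:ℝ) 1 → b ∈ Icc (0:ℝ) 1 →
      k |a| ≤ k b + k' b * (a - b) - K / 2 * (a - b) ^ 2 := by
    intro a b ha hb
    have hd : k' b + K * b ≤ 0 := le_trans (gexit_deriv_bound hk'' hK'' hb) hk'0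
    rcases le_or_gt 0 a with hA | hA
    · rw [abs_of_nonneg hA]
      exact gexit_taylor2 hk' hk'' hK'' hb ⟨hA, ha.2⟩
    · rw [abs_of_neg hA]
      have h1 := gexit_taylor2 hk' hk'' hK'' hb (show -a ∈ Icc (0:ℝ) 1 by
        constructor <;> [linarith [hA.le]; linarith [ha.1]])
      nlinarith [mul_nonneg (by linarith : (0:ℝ) ≤ -a) (by linarith : (0:ℝ) ≤ -(k' b + K * b))]
  rcases lt_trichotomy b 0 with hB | hB | hB
  · rw [Real.sign_of_neg hB, abs_of_neg hB]
    have := aux (-a) (-b) (by constructor <;> [linarith [ha.2]; linarith [ha.1]])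
      (by constructor <;> [linarith [hB.le]; linarith [hb.1]])
    rw [abs_neg] at this
    have heq : (-a - -b) = -(a - b) := by ring
    nlinarith [this]
  · subst hB
    simp only [Real.sign_zero, zero_mul, abs_zero, sub_zero]
    have hamem : |a| ∈ Icc (0:ℝ) 1 := ⟨abs_nonneg a, abs_le.2 ⟨ha.1, ha.2⟩⟩
    have h1 := gexit_taylor2 hk' hk'' hK''
      (show (0:ℝ) ∈ Icc (0:ℝ) 1 by norm_num) hamem
    have h2 : k' 0 * |a| ≤ 0 := mul_nonpos_of_nonpos_of_nonneg hk'0 (abs_nonneg a)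
    have h3 : |a| ^ 2 = a ^ 2 := sq_abs a
    nlinarith [h1]
  · rw [Real.sign_of_pos hB, abs_of_pos hB, one_mul]
    exact aux a b ha ⟨hB.le, hb.2⟩

private lemma gexit_markov_tower {Ω β γ : Type*} [mΩ : MeasurableSpace Ω] [StandardBorelSpace Ω]
    [MeasurableSpace β] [MeasurableSpace γ]
    (μ : Measure Ω) [IsProbabilityMeasure μ]
    (X : Ω → ℝ) (Y : Ω → β) (Z : Ω → γ)
    (hX : Measurable X) (hY : Measurable Y) (hZ : Measurable Z)
    (hXval : ∀ ω, X ω = 1 ∨ X ω = -1)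
    (hMarkov : CondIndepFun (MeasurableSpace.comap Y inferInstance) hY.comap_le X Z μ) :
    μ[X | MeasurableSpace.comap Z inferInstance] =ᵐ[μ]
      μ[μ[X | MeasurableSpace.comap Y inferInstance] | MeasurableSpace.comap Z inferInstance] := by
  have hmY : MeasurableSpace.comap Y inferInstance ≤ mΩ := hY.comap_le
  have hmZ : MeasurableSpace.comap Z inferInstance ≤ mΩ := hZ.comap_le
  have hXint : Integrable X μ := by
    refine (integrable_const (1:ℝ)).mono' hX.aestronglyMeasurable ?_
    filter_upwards with ω
    rcases hXval ω with h | h <;> simp [h]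
  have hA : MeasurableSet[mΩ] (X ⁻¹' {1}) := hX (measurableSet_singleton 1)
  have hIint : Integrable ((X ⁻¹' {1}).indicator (fun _ => (1:ℝ))) μ :=
    (integrable_const 1).indicator hA
  have hXeq : X = fun ω => 2 * (X ⁻¹' {1}).indicator (fun _ => (1:ℝ)) ω - 1 := by
    funext ω
    rcases hXval ω with h | h
    · have hω : ω ∈ X ⁻¹' {1} := by simp [Set.mem_preimage, h]
      norm_num [Set.indicator_of_mem hω, h]
    · have hω : ω ∉ X ⁻¹' {1} := by norm_num [Set.mem_preimage, h]
      norm_num [Set.indicator_of_notMem hω, h]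
  have hcond : ∀ (m : MeasurableSpace Ω), m ≤ mΩ →
      μ[X | m] =ᵐ[μ] fun ω => 2 * (μ[(X ⁻¹' {1}).indicator (fun _ => (1:ℝ)) | m]) ω - 1 := by
    intro m hm
    have h0 : X = (2:ℝ) • (X ⁻¹' {1}).indicator (fun _ => (1:ℝ)) - (fun _ => (1:ℝ)) := by
      funext ω
      have h := congrFun hXeq ω
      simpa [smul_eq_mul] using h
    have h1 : μ[X|m]
        = μ[(2:ℝ) • (X ⁻¹' {1}).indicator (fun _ => (1:ℝ)) - (fun _ => (1:ℝ))|m] := by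
      conv_lhs => rw [h0]
    rw [h1]
    have h2 := condExp_sub (μ := μ) (m := m) (hIint.smul (2:ℝ)) (integrable_const (1:ℝ))
    have h3 := condExp_smul (μ := μ) (m := m) (2:ℝ) ((X ⁻¹' {1}).indicator (fun _ => (1:ℝ)))
    have h4 : μ[(fun _ => (1:ℝ)) | m] = fun _ => (1:ℝ) := condExp_const hm 1
    filter_upwards [h2, h3] with ω h2ω h3ω
    simp only [Pi.sub_apply, Pi.smul_apply, smul_eq_mul] at h2ω h3ω ⊢
    rw [h2ω, h3ω, h4]
  have key : ∀ s : Set Ω, MeasurableSet[MeasurableSpace.comap Z inferInstance] s →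
      ∫ x in s, (μ[X | MeasurableSpace.comap Y inferInstance]) x ∂μ = ∫ x in s, X x ∂μ := by
    rintro s ⟨t, ht, rfl⟩
    have hs0 : MeasurableSet[mΩ] (Z ⁻¹' t) := hZ ht
    have hgint : Integrable ((Z ⁻¹' t).indicator (fun _ => (1:ℝ))) μ :=
      (integrable_const 1).indicator hs0
    have hfg : Integrable ((μ[(X ⁻¹' {1}).indicator (fun _ => (1:ℝ)) |
        MeasurableSpace.comap Y inferInstance]) * (Z ⁻¹' t).indicator (fun _ => (1:ℝ))) μ := by
      have h1 : Integrable (fun x => (Z ⁻¹' t).indicator (fun _ => (1:ℝ)) x *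
          (μ[(X ⁻¹' {1}).indicator (fun _ => (1:ℝ)) |
            MeasurableSpace.comap Y inferInstance]) x) μ := by
        refine Integrable.bdd_mul integrable_condExp hgint.aestronglyMeasurable (c := 1) (Filter.Eventually.of_forall fun x => ?_)
        by_cases hx : x ∈ Z ⁻¹' t <;>
          simp [Set.indicator_of_mem, Set.indicator_of_notMem, hx]
      exact h1.congr (by filter_upwards with x; exact mul_comm _ _)
    have hpull := condExp_mul_of_stronglyMeasurable_left (μ := μ)
      (m := MeasurableSpace.comap Y inferInstance) stronglyMeasurable_condExp hfg hgint
    have hMk := (condIndepFun_iff_condExp_inter_preimage_eq_mul hX hZ).mp hMarkov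
      {1} t (measurableSet_singleton 1) ht
    have core : ∫ x in Z ⁻¹' t, (μ[(X ⁻¹' {1}).indicator (fun _ => (1:ℝ)) |
        MeasurableSpace.comap Y inferInstance]) x ∂μ = (μ (X ⁻¹' {1} ∩ Z ⁻¹' t)).toReal := by
      have step1 : ∫ x in Z ⁻¹' t, (μ[(X ⁻¹' {1}).indicator (fun _ => (1:ℝ)) |
          MeasurableSpace.comap Y inferInstance]) x ∂μ
          = ∫ x, ((μ[(X ⁻¹' {1}).indicator (fun _ => (1:ℝ)) |
              MeasurableSpace.comap Y inferInstance])
                * (Z ⁻¹' t).indicator (fun _ => (1:ℝ))) x ∂μ := by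
        rw [← integral_indicator hs0]
        congr 1
        funext x
        by_cases hx : x ∈ Z ⁻¹' t <;>
          simp [Set.indicator_of_mem, Set.indicator_of_notMem, hx]
      rw [step1, ← integral_condExp hmY, integral_congr_ae (hpull.trans hMk.symm),
        integral_condExp hmY, integral_indicator (hA.inter hs0)]
      simp
      rfl
    have hXside : ∫ x in Z ⁻¹' t, X x ∂μ
        = 2 * (μ (X ⁻¹' {1} ∩ Z ⁻¹' t)).toReal - (μ (Z ⁻¹' t)).toReal := by
      have hcg : ∫ x in Z ⁻¹' t, X x ∂μ
          = ∫ x in Z ⁻¹' t, (2 * (X ⁻¹' {1}).indicator (fun _ => (1:ℝ)) x - 1) ∂μ := by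
        refine setIntegral_congr_ae hs0 ?_
        filter_upwards with x _
        exact congrFun hXeq x
      rw [hcg,
        integral_sub ((hIint.const_mul 2).integrableOn) (integrable_const 1).integrableOn,
        integral_const_mul, setIntegral_indicator hA]
      simp [Set.inter_comm]
      rfl
    have hYside : ∫ x in Z ⁻¹' t, (μ[X | MeasurableSpace.comap Y inferInstance]) x ∂μ
        = 2 * (μ (X ⁻¹' {1} ∩ Z ⁻¹' t)).toReal - (μ (Z ⁻¹' t)).toReal := by
      rw [setIntegral_congr_ae hs0 (((hcond _ hmY)).mono fun x hx _ => hx),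
        integral_sub ((integrable_condExp.const_mul (2:ℝ)).integrableOn)
          (integrable_const 1).integrableOn,
        integral_const_mul, core]
      simp
      rfl
    rw [hXside, hYside]
  exact ae_eq_condExp_of_forall_setIntegral_eq
    (f := μ[X | MeasurableSpace.comap Y inferInstance])
    (g := μ[X | MeasurableSpace.comap Z inferInstance]) hmZ integrable_condExp
    (fun s _ _ => integrable_condExp.integrableOn)
    (fun s hs _ => by rw [setIntegral_condExp hmZ hXint hs]; exact (key s hs).symm)
    stronglyMeasurable_condExp.aestronglyMeasurable

end Aux

/-- Let `X` take values in `{+1, −1}` and let `X → Y → Z` be a Markov chain.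
If `k` is twice differentiable on `[0, 1]` with `k'(0) ≤ 0` and `k'' ≤ −K < 0` there,
then, writing `μY = E[X | Y]` and `μZ = E[X | Z]`,
`E[k(|μY|)] ≤ E[k(|μZ|)] − (K/2) ⬝ E[|μY − μZ|²]`. -/
theorem gexit_square_error
    {Ω β γ : Type*} [mΩ : MeasurableSpace Ω] [StandardBorelSpace Ω] [Nonempty Ω]
    [MeasurableSpace β] [MeasurableSpace γ]
    (μ : Measure Ω) [IsProbabilityMeasure μ]
    (X : Ω → ℝ) (Y : Ω → β) (Z : Ω → γ)
    (hX : Measurable X) (hY : Measurable Y) (hZ : Measurable Z)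
    (hXval : ∀ ω, X ω = 1 ∨ X ω = -1)
    (hMarkov : CondIndepFun (MeasurableSpace.comap Y inferInstance) hY.comap_le X Z μ)
    (K : ℝ) (hK : 0 < K)
    (k k' k'' : ℝ → ℝ)
    (hk' : ∀ x ∈ Set.Icc (0 : ℝ) 1, HasDerivAt k (k' x) x)
    (hk'' : ∀ x ∈ Set.Icc (0 : ℝ) 1, HasDerivAt k' (k'' x) x)
    (hk'0 : k' 0 ≤ 0)
    (hK'' : ∀ x ∈ Set.Icc (0 : ℝ) 1, k'' x ≤ -K) :
    ∫ ω, k |(μ[X | MeasurableSpace.comap Y inferInstance]) ω| ∂μ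
      ≤ ∫ ω, k |(μ[X | MeasurableSpace.comap Z inferInstance]) ω| ∂μ
        - (K / 2) * ∫ ω, |(μ[X | MeasurableSpace.comap Y inferInstance]) ω
            - (μ[X | MeasurableSpace.comap Z inferInstance]) ω| ^ 2 ∂μ := by
  have hmY : MeasurableSpace.comap Y inferInstance ≤ mΩ := hY.comap_le
  have hmZ : MeasurableSpace.comap Z inferInstance ≤ mΩ := hZ.comap_le
  set μY : Ω → ℝ := μ[X | MeasurableSpace.comap Y inferInstance] with hμYdef
  set μZ : Ω → ℝ := μ[X | MeasurableSpace.comap Z inferInstance] with hμZdef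
  -- a.e. bounds on the conditional expectations
  have hXbdd : ∀ᵐ ω ∂μ, |X ω| ≤ ((1 : NNReal) : ℝ) := by
    filter_upwards with ω
    rcases hXval ω with h | h <;> simp [h]
  have hbY : ∀ᵐ ω ∂μ, |μY ω| ≤ 1 := by
    have := ae_bdd_condExp_of_ae_bdd (m := MeasurableSpace.comap Y inferInstance) hXbdd
    simpa using this
  have hbZ : ∀ᵐ ω ∂μ, |μZ ω| ≤ 1 := by
    have := ae_bdd_condExp_of_ae_bdd (m := MeasurableSpace.comap Z inferInstance) hXbdd
    simpa using this
  -- continuity / boundedness of k and k' on [0,1]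
  have hkc : ContinuousOn k (Set.Icc (0:ℝ) 1) :=
    fun x hx => ((hk' x hx).continuousAt).continuousWithinAt
  have hk'c : ContinuousOn k' (Set.Icc (0:ℝ) 1) :=
    fun x hx => ((hk'' x hx).continuousAt).continuousWithinAt
  have hmin : ∀ m : ℝ, min 1 |m| ∈ Set.Icc (0:ℝ) 1 :=
    fun m => ⟨le_min zero_le_one (abs_nonneg m), min_le_left _ _⟩
  have hminc : Continuous (fun m : ℝ => min 1 |m|) := continuous_const.min continuous_abs
  set q : ℝ → ℝ := fun m => k (min 1 |m|) with hqdef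
  set d : ℝ → ℝ := fun m => Real.sign m * k' (min 1 |m|) with hddef
  have hqc : Continuous q := hkc.comp_continuous hminc hmin
  have hk'minc : Continuous (fun m : ℝ => k' (min 1 |m|)) := hk'c.comp_continuous hminc hmin
  have hsign : Measurable Real.sign := by
    have : Real.sign = fun r : ℝ => if r < 0 then (-1:ℝ) else if 0 < r then 1 else 0 := rfl
    rw [this]
    exact Measurable.ite (measurableSet_lt measurable_id' measurable_const) measurable_const
      (Measurable.ite (measurableSet_lt measurable_const measurable_id') measurable_const
        measurable_const)
  have hdm : Measurable d := hsign.mul hk'minc.measurable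
  obtain ⟨Ck, hCk⟩ := isCompact_Icc.exists_bound_of_continuousOn hk'c
  obtain ⟨Cq, hCq⟩ := isCompact_Icc.exists_bound_of_continuousOn hkc
  have hdb : ∀ m : ℝ, ‖d m‖ ≤ Ck := by
    intro m
    have h1 : |Real.sign m| ≤ 1 := by
      rcases Real.sign_apply_eq m with h | h | h <;> simp [h]
    have h2 : ‖k' (min 1 |m|)‖ ≤ Ck := hCk _ (hmin m)
    have h3 : (0:ℝ) ≤ ‖k' (min 1 |m|)‖ := norm_nonneg _
    calc ‖d m‖ = |Real.sign m| * ‖k' (min 1 |m|)‖ := by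
          rw [hddef]; simp [Real.norm_eq_abs, abs_mul]
      _ ≤ 1 * Ck := mul_le_mul h1 h2 h3 zero_le_one
      _ = Ck := one_mul Ck
  have hqb : ∀ m : ℝ, ‖q m‖ ≤ Cq := fun m => hCq _ (hmin m)
  -- measurability of μY, μZ
  have hμYsm : StronglyMeasurable μY := stronglyMeasurable_condExp.mono hmY
  have hμZsm : StronglyMeasurable μZ := stronglyMeasurable_condExp.mono hmZ
  set W : Ω → ℝ := fun ω => μY ω - μZ ω with hWdef
  have hWint : Integrable W μ := integrable_condExp.sub integrable_condExp
  -- integrability of all integrands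
  have iqY : Integrable (fun ω => q (μY ω)) μ := by
    refine (integrable_const Cq).mono'
      ((hqc.comp_stronglyMeasurable hμYsm).aestronglyMeasurable) ?_
    filter_upwards with ω using hqb _
  have iqZ : Integrable (fun ω => q (μZ ω)) μ := by
    refine (integrable_const Cq).mono'
      ((hqc.comp_stronglyMeasurable hμZsm).aestronglyMeasurable) ?_
    filter_upwards with ω using hqb _
  have idW : Integrable (fun ω => d (μZ ω) * W ω) μ :=
    Integrable.bdd_mul hWint ((hdm.comp hμZsm.measurable).aestronglyMeasurable)
      (Filter.Eventually.of_forall fun ω => hdb _)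
  have iW2 : Integrable (fun ω => W ω ^ 2) μ := by
    refine (integrable_const (4:ℝ)).mono'
      (((hμYsm.measurable.sub hμZsm.measurable).pow_const 2).aestronglyMeasurable) ?_
    filter_upwards [hbY, hbZ] with ω h1 h2
    have : |W ω| ≤ 2 := by
      rw [hWdef]
      calc |μY ω - μZ ω| ≤ |μY ω| + |μZ ω| := abs_sub _ _
        _ ≤ 2 := by linarith
    calc ‖W ω ^ 2‖ = |W ω| ^ 2 := by rw [Real.norm_eq_abs, abs_pow]
      _ ≤ 4 := by nlinarith [abs_nonneg (W ω)]
  have idY : Integrable (fun ω => d (μZ ω) * μY ω) μ :=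
    Integrable.bdd_mul integrable_condExp ((hdm.comp hμZsm.measurable).aestronglyMeasurable)
      (Filter.Eventually.of_forall fun ω => hdb _)
  have idZ : Integrable (fun ω => d (μZ ω) * μZ ω) μ :=
    Integrable.bdd_mul integrable_condExp ((hdm.comp hμZsm.measurable).aestronglyMeasurable)
      (Filter.Eventually.of_forall fun ω => hdb _)
  -- the cross term vanishes
  have htower := gexit_markov_tower μ X Y Z hX hY hZ hXval hMarkov
  have hzero : ∫ ω, d (μZ ω) * W ω ∂μ = 0 := by
    have hsmZ : StronglyMeasurable[MeasurableSpace.comap Z inferInstance]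
        (fun ω => d (μZ ω)) := by
      have h1 : Measurable[MeasurableSpace.comap Z inferInstance] μZ :=
        (stronglyMeasurable_condExp (m := MeasurableSpace.comap Z inferInstance)).measurable
      exact (hdm.comp h1).stronglyMeasurable
    have hY1 : ∫ ω, d (μZ ω) * μY ω ∂μ = ∫ ω, d (μZ ω) * μZ ω ∂μ := by
      have hpull := condExp_mul_of_stronglyMeasurable_left (μ := μ)
        (m := MeasurableSpace.comap Z inferInstance) hsmZ
        (f := fun ω => d (μZ ω)) (g := μY) idY integrable_condExp
      have hμYZ : μ[μY | MeasurableSpace.comap Z inferInstance] =ᵐ[μ] μZ := htower.symm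
      have h2 : ((fun ω => d (μZ ω)) * μ[μY | MeasurableSpace.comap Z inferInstance])
          =ᵐ[μ] fun ω => d (μZ ω) * μZ ω := by
        filter_upwards [hμYZ] with ω hω
        simp only [Pi.mul_apply, hω]
      calc ∫ ω, d (μZ ω) * μY ω ∂μ
          = ∫ ω, (μ[(fun ω => d (μZ ω)) * μY | MeasurableSpace.comap Z inferInstance]) ω ∂μ :=
            (integral_condExp hmZ).symm
        _ = ∫ ω, d (μZ ω) * μZ ω ∂μ := integral_congr_ae (hpull.trans h2)
    have hsplit : ∫ ω, d (μZ ω) * W ω ∂μ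
        = ∫ ω, d (μZ ω) * μY ω ∂μ - ∫ ω, d (μZ ω) * μZ ω ∂μ := by
      rw [← integral_sub idY idZ]
      refine integral_congr_ae ?_
      filter_upwards with ω
      rw [hWdef]
      ring
    rw [hsplit, hY1, sub_self]
  -- pointwise inequality, a.e.
  have hae : ∀ᵐ ω ∂μ, q (μY ω) ≤ q (μZ ω) + d (μZ ω) * W ω - K / 2 * W ω ^ 2 := by
    filter_upwards [hbY, hbZ] with ω h1 h2
    have ha : μY ω ∈ Set.Icc (-1:ℝ) 1 := by
      have := abs_le.mp h1; exact ⟨this.1, this.2⟩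
    have hb : μZ ω ∈ Set.Icc (-1:ℝ) 1 := by
      have := abs_le.mp h2; exact ⟨this.1, this.2⟩
    have hqY : q (μY ω) = k |μY ω| := by rw [hqdef]; simp [min_eq_right h1]
    have hqZ : q (μZ ω) = k |μZ ω| := by rw [hqdef]; simp [min_eq_right h2]
    have hdZ : d (μZ ω) = Real.sign (μZ ω) * k' |μZ ω| := by
      rw [hddef]; simp [min_eq_right h2]
    rw [hqY, hqZ, hdZ, hWdef]
    exact gexit_pointwise hK hk' hk'' hk'0 hK'' ha hb
  -- put everything together
  have hmain : ∫ ω, q (μY ω) ∂μ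
      ≤ ∫ ω, q (μZ ω) ∂μ - K / 2 * ∫ ω, W ω ^ 2 ∂μ := by
    have hI2 : Integrable (fun ω => K / 2 * W ω ^ 2) μ := iW2.const_mul (K / 2)
    have hI1 : Integrable (fun ω => q (μZ ω) + d (μZ ω) * W ω) μ := iqZ.add idW
    have hR : Integrable (fun ω => q (μZ ω) + d (μZ ω) * W ω - K / 2 * W ω ^ 2) μ := hI1.sub hI2
    have hstep := integral_mono_ae iqY hR hae
    have e1 : ∫ ω, (q (μZ ω) + d (μZ ω) * W ω - K / 2 * W ω ^ 2) ∂μ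
        = ∫ ω, (q (μZ ω) + d (μZ ω) * W ω) ∂μ - ∫ ω, K / 2 * W ω ^ 2 ∂μ := integral_sub hI1 hI2
    have e2 : ∫ ω, (q (μZ ω) + d (μZ ω) * W ω) ∂μ
        = ∫ ω, q (μZ ω) ∂μ + ∫ ω, d (μZ ω) * W ω ∂μ := integral_add iqZ idW
    have e3 : ∫ ω, K / 2 * W ω ^ 2 ∂μ = K / 2 * ∫ ω, W ω ^ 2 ∂μ := integral_const_mul _ _
    rw [e1, e2, e3, hzero, add_zero] at hstep
    exact hstep
  have heqY : ∫ ω, q (μY ω) ∂μ = ∫ ω, k |μY ω| ∂μ := by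
    refine integral_congr_ae ?_
    filter_upwards [hbY] with ω h1
    rw [hqdef]; simp [min_eq_right h1]
  have heqZ : ∫ ω, q (μZ ω) ∂μ = ∫ ω, k |μZ ω| ∂μ := by
    refine integral_congr_ae ?_
    filter_upwards [hbZ] with ω h2
    rw [hqdef]; simp [min_eq_right h2]
  have heqW : ∫ ω, W ω ^ 2 ∂μ = ∫ ω, |μY ω - μZ ω| ^ 2 ∂μ := by
    refine integral_congr_ae ?_
    filter_upwards with ω
    rw [hWdef, sq_abs]
  rw [heqY, heqZ, heqW] at hmain
  exact hmain
end

section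
/- For z, w ∈ (−1, 1) define β(z, w) = log₂(1 + ((1 − z)(1 − w))/((1 + z)(1 + w))) and α(z, w) = (1/4) · Σ_{i, j ∈ {−1, +1}} (1 + i z)(1 + j w) · β(i z, j w). Then for all z, w ∈ (−1, 1): the partial derivative of α with respect to w equals (z/2)·log₂((1 + w z)/(1 − w z)) − (1/2)·log₂((1 + w)/(1 − w)), and the second partial derivative of α with respect to w equals (1/ln 2) · ( z²/(1 − w² z²) − 1/(1 − w²) ). -/
open Real

/-- `β(z, w) = log₂(1 + ((1 − z)(1 − w))/((1 + z)(1 + w)))`, the GEXIT kernel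
building block in the `|D|`-domain. -/
noncomputable def betaKernel (z w : ℝ) : ℝ :=
  Real.logb 2 (1 + ((1 - z) * (1 - w)) / ((1 + z) * (1 + w)))

/-- `α(z, w) = (1/4) Σ_{i,j∈{−1,+1}} (1 + i z)(1 + j w) β(i z, j w)`,
the GEXIT kernel in the `|D|`-domain. -/
noncomputable def alphaKernel (z w : ℝ) : ℝ :=
  (1 / 4) * ∑ i ∈ ({-1, 1} : Finset ℝ), ∑ j ∈ ({-1, 1} : Finset ℝ),
    (1 + i * z) * (1 + j * w) * betaKernel (i * z) (j * w)

noncomputable def Fk (s : ℝ) : ℝ :=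
  (1 + s) * Real.logb 2 (1 + s) + (1 - s) * Real.logb 2 (1 - s)

lemma ioo_mul {z w : ℝ} (hz : z ∈ Set.Ioo (-1:ℝ) 1) (hw : w ∈ Set.Ioo (-1:ℝ) 1) :
    z * w ∈ Set.Ioo (-1:ℝ) 1 := by
  obtain ⟨hz1, hz2⟩ := hz; obtain ⟨hw1, hw2⟩ := hw
  constructor <;> nlinarith

lemma betaKernel_eq {a b : ℝ} (ha : a ∈ Set.Ioo (-1:ℝ) 1) (hb : b ∈ Set.Ioo (-1:ℝ) 1) :
    betaKernel a b = 1 + Real.logb 2 (1 + a*b) - Real.logb 2 (1+a) - Real.logb 2 (1+b) := by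
  have h1 : (0:ℝ) < 1 + a := by linarith [ha.1]
  have h2 : (0:ℝ) < 1 + b := by linarith [hb.1]
  have h3 : (0:ℝ) < 1 + a*b := by nlinarith [ha.1, ha.2, hb.1, hb.2]
  have key : 1 + ((1 - a) * (1 - b)) / ((1 + a) * (1 + b)) = 2*(1+a*b)/((1+a)*(1+b)) := by
    field_simp; ring
  rw [betaKernel, key, Real.logb_div (by positivity) (by positivity),
      Real.logb_mul (by norm_num) h3.ne',
      Real.logb_mul h1.ne' h2.ne', Real.logb_self_eq_one (by norm_num)]
  ring

lemma neg_mem_ioo {a : ℝ} (ha : a ∈ Set.Ioo (-1:ℝ) 1) : -a ∈ Set.Ioo (-1:ℝ) 1 := by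
  obtain ⟨h1, h2⟩ := ha; constructor <;> linarith

lemma alpha_closed {z w : ℝ} (hz : z ∈ Set.Ioo (-1:ℝ) 1) (hw : w ∈ Set.Ioo (-1:ℝ) 1) :
    alphaKernel z w = 1 + (1/2) * (Fk (z*w) - Fk z - Fk w) := by
  have hne : (-1:ℝ) ≠ 1 := by norm_num
  rw [alphaKernel]
  simp only [Finset.sum_pair hne, neg_one_mul, one_mul]
  rw [betaKernel_eq (neg_mem_ioo hz) (neg_mem_ioo hw),
      betaKernel_eq (neg_mem_ioo hz) hw,
      betaKernel_eq hz (neg_mem_ioo hw),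
      betaKernel_eq hz hw]
  simp only [Fk, neg_mul_neg, mul_neg, neg_neg]
  ring_nf

lemma logb_ratio {a : ℝ} (ha : a ∈ Set.Ioo (-1:ℝ) 1) :
    Real.logb 2 ((1+a)/(1-a)) = (Real.log (1+a) - Real.log (1-a)) / Real.log 2 := by
  have h1 : (0:ℝ) < 1 + a := by linarith [ha.1]
  have h2 : (0:ℝ) < 1 - a := by linarith [ha.2]
  rw [Real.logb, Real.log_div h1.ne' h2.ne']

lemma hasDerivAt_Fk {s : ℝ} (hs : s ∈ Set.Ioo (-1:ℝ) 1) :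
    HasDerivAt Fk (Real.logb 2 ((1+s)/(1-s))) s := by
  have h1 : (0:ℝ) < 1 + s := by linarith [hs.1]
  have h2 : (0:ℝ) < 1 - s := by linarith [hs.2]
  have hl2 : Real.log 2 ≠ 0 := (Real.log_pos one_lt_two).ne'
  have d1 : HasDerivAt (fun t:ℝ => 1 + t) 1 s := (hasDerivAt_id s).const_add 1
  have d2 : HasDerivAt (fun t:ℝ => 1 - t) (-1) s := (hasDerivAt_id s).const_sub 1
  have dl1 := d1.log h1.ne'
  have dl2 := d2.log h2.ne'
  have dm1 := d1.mul (dl1.div_const (Real.log 2))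
  have dm2 := d2.mul (dl2.div_const (Real.log 2))
  have dsum := dm1.add dm2
  have hFk : Fk = fun t => (1+t)*(Real.log (1+t)/Real.log 2) + (1-t)*(Real.log (1-t)/Real.log 2) := by
    funext t; simp [Fk, Real.logb]
  rw [hFk, logb_ratio hs]
  refine dsum.congr_deriv ?_
  field_simp
  ring

/-- For `z, w ∈ (−1, 1)`:
`∂α/∂w = (z/2)·log₂((1 + wz)/(1 − wz)) − (1/2)·log₂((1 + w)/(1 − w))` and
`∂²α/∂w² = (1/ln 2)·(z²/(1 − w²z²) − 1/(1 − w²))`. -/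
theorem alphaKernel_deriv_w :
    ∀ z ∈ Set.Ioo (-1 : ℝ) 1, ∀ w ∈ Set.Ioo (-1 : ℝ) 1,
      HasDerivAt (fun w' => alphaKernel z w')
        ((z / 2) * Real.logb 2 ((1 + w * z) / (1 - w * z))
          - (1 / 2) * Real.logb 2 ((1 + w) / (1 - w))) w
      ∧
      HasDerivAt (fun w' => (z / 2) * Real.logb 2 ((1 + w' * z) / (1 - w' * z))
            - (1 / 2) * Real.logb 2 ((1 + w') / (1 - w')))
        ((1 / Real.log 2) * (z ^ 2 / (1 - w ^ 2 * z ^ 2) - 1 / (1 - w ^ 2))) w := by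
  intro z hz w hw
  have hl2 : Real.log 2 ≠ 0 := (Real.log_pos one_lt_two).ne'
  have hzw : z * w ∈ Set.Ioo (-1:ℝ) 1 := ioo_mul hz hw
  have hp1 : (0:ℝ) < 1 + w * z := by nlinarith [hz.1, hz.2, hw.1, hw.2]
  have hp2 : (0:ℝ) < 1 - w * z := by nlinarith [hz.1, hz.2, hw.1, hw.2]
  have hp3 : (0:ℝ) < 1 + w := by linarith [hw.1]
  have hp4 : (0:ℝ) < 1 - w := by linarith [hw.2]
  constructor
  · -- first derivative
    have dzw : HasDerivAt (fun w' => z * w') z w := by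
      simpa using (hasDerivAt_id w).const_mul z
    have dFzw : HasDerivAt (fun w' => Fk (z * w')) (Real.logb 2 ((1+z*w)/(1-z*w)) * z) w :=
      (hasDerivAt_Fk hzw).comp w dzw
    have dFw := hasDerivAt_Fk hw
    have dcf : HasDerivAt (fun w' => 1 + (1/2) * (Fk (z*w') - Fk z - Fk w'))
        ((1/2) * (Real.logb 2 ((1+z*w)/(1-z*w)) * z - Real.logb 2 ((1+w)/(1-w)))) w :=
      (((dFzw.sub_const (Fk z)).sub dFw).const_mul (1/2)).const_add 1
    have hev : (fun w' => alphaKernel z w') =ᶠ[nhds w]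
        (fun w' => 1 + (1/2) * (Fk (z*w') - Fk z - Fk w')) := by
      filter_upwards [Ioo_mem_nhds hw.1 hw.2] with x hx
      exact alpha_closed hz hx
    have h := dcf.congr_of_eventuallyEq hev
    refine h.congr_deriv ?_
    rw [show (1:ℝ) + w*z = 1 + z*w by ring, show (1:ℝ) - w*z = 1 - z*w by ring]
    ring
  · -- second derivative
    have hq1 : (0:ℝ) < 1 - w^2*z^2 := by nlinarith
    have hq2 : (0:ℝ) < 1 - w^2 := by nlinarith
    have d1 : HasDerivAt (fun w' : ℝ => 1 + w' * z) z w := by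
      simpa using ((hasDerivAt_id w).mul_const z).const_add 1
    have d2 : HasDerivAt (fun w' : ℝ => 1 - w' * z) (-z) w := by
      simpa using ((hasDerivAt_id w).mul_const z).const_sub 1
    have d3 : HasDerivAt (fun w' : ℝ => 1 + w') 1 w := (hasDerivAt_id w).const_add 1
    have d4 : HasDerivAt (fun w' : ℝ => 1 - w') (-1) w := (hasDerivAt_id w).const_sub 1
    have dl1 := d1.log hp1.ne'
    have dl2 := d2.log hp2.ne'
    have dl3 := d3.log hp3.ne'
    have dl4 := d4.log hp4.ne'
    have dA := (((dl1.sub dl2).div_const (Real.log 2)).const_mul (z/2))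
    have dB := (((dl3.sub dl4).div_const (Real.log 2)).const_mul (1/2))
    have dg2 := dA.sub dB
    have hev : (fun w' => (z / 2) * Real.logb 2 ((1 + w' * z) / (1 - w' * z))
            - (1 / 2) * Real.logb 2 ((1 + w') / (1 - w'))) =ᶠ[nhds w]
        (fun w' => z / 2 * ((Real.log (1 + w' * z) - Real.log (1 - w' * z)) / Real.log 2)
            - 1 / 2 * ((Real.log (1 + w') - Real.log (1 - w')) / Real.log 2)) := by
      filter_upwards [Ioo_mem_nhds hw.1 hw.2] with x hx
      rw [logb_ratio (ioo_mul hx hz), logb_ratio hx]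
    have h := dg2.congr_of_eventuallyEq hev
    refine h.congr_deriv ?_
    rw [show (1:ℝ) - w^2*z^2 = (1+w*z)*(1-w*z) by ring, show (1:ℝ) - w^2 = (1+w)*(1-w) by ring]
    have hp1' : (1:ℝ) + z*w ≠ 0 := by nlinarith
    have hp2' : (1:ℝ) - z*w ≠ 0 := by nlinarith
    field_simp
    ring
end

section
/- For z, w ∈ (−1, 1) define β(z, w) = log₂(1 + ((1 − z)(1 − w))/((1 + z)(1 + w))) and α(z, w) = (1/4) · Σ_{i, j ∈ {−1, +1}} (1 + i z)(1 + j w) · β(i z, j w). Then for all z, w ∈ (−1, 1), the mixed second partial derivative ∂²α/∂z∂w equals (1/ln 2) · ( (1/2)·ln((1 + w z)/(1 − w z)) + w z/(1 − w² z²) ). In particular, ∂²α/∂z∂w(z, w) ≥ 0 for all z, w ∈ [0, 1). -/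
open Real

noncomputable def Faux (t : ℝ) : ℝ := (1 + t) * Real.log (1 + t) + (1 - t) * Real.log (1 - t)

lemma beta_eq {a b : ℝ} (ha1 : -1 < a) (ha2 : a < 1) (hb1 : -1 < b) (hb2 : b < 1) :
    betaKernel a b
      = (Real.log 2 + Real.log (1 + a * b) - Real.log (1 + a) - Real.log (1 + b))
          / Real.log 2 := by
  have ha : (0:ℝ) < 1 + a := by linarith
  have hb : (0:ℝ) < 1 + b := by linarith
  have hab : (0:ℝ) < 1 + a * b := by nlinarith
  have h1 : 1 + (1 - a) * (1 - b) / ((1 + a) * (1 + b)) = 2 * (1 + a * b) / ((1 + a) * (1 + b)) := by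
    field_simp; ring
  rw [betaKernel, Real.logb, h1, Real.log_div (by positivity) (by positivity),
    Real.log_mul two_ne_zero hab.ne', Real.log_mul ha.ne' hb.ne']
  ring

lemma alpha_eq {z w : ℝ} (hz : z ∈ Set.Ioo (-1:ℝ) 1) (hw : w ∈ Set.Ioo (-1:ℝ) 1) :
    alphaKernel z w = 1 + (Faux (z * w) - Faux z - Faux w) / (2 * Real.log 2) := by
  obtain ⟨hz1, hz2⟩ := hz
  obtain ⟨hw1, hw2⟩ := hw
  have hlog2 : Real.log 2 ≠ 0 := by
    have := Real.log_pos one_lt_two; linarith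
  rw [alphaKernel]
  simp only [Finset.sum_pair (by norm_num : (-1:ℝ) ≠ 1)]
  simp only [neg_one_mul, one_mul]
  rw [beta_eq (by linarith) (by linarith) (by linarith) (by linarith),
      beta_eq (by linarith) (by linarith) (by linarith) (by linarith),
      beta_eq (by linarith) (by linarith) (by linarith) (by linarith),
      beta_eq (by linarith) (by linarith) (by linarith) (by linarith)]
  rw [show (-z) * (-w) = z * w by ring, show (-z) * w = -(z*w) by ring,
      show z * (-w) = -(z*w) by ring]
  rw [show (1:ℝ) + -(z*w) = 1 - z*w by ring, show (1:ℝ) + -z = 1 - z by ring,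
      show (1:ℝ) + -w = 1 - w by ring]
  simp only [Faux]
  field_simp
  ring

lemma hasDerivAt_Faux {t : ℝ} (h1 : -1 < t) (h2 : t < 1) :
    HasDerivAt Faux (Real.log (1 + t) - Real.log (1 - t)) t := by
  have hp : (0:ℝ) < 1 + t := by linarith
  have hm : (0:ℝ) < 1 - t := by linarith
  have hap : HasDerivAt (fun x : ℝ => 1 + x) 1 t := (hasDerivAt_id t).const_add 1
  have ham : HasDerivAt (fun x : ℝ => 1 - x) (-1) t := by
    simpa using (hasDerivAt_id t).const_sub 1
  have hlp : HasDerivAt (fun x : ℝ => Real.log (1 + x)) ((1 + t)⁻¹ * 1) t :=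
    (Real.hasDerivAt_log hp.ne').comp t hap
  have hlm : HasDerivAt (fun x : ℝ => Real.log (1 - x)) ((1 - t)⁻¹ * (-1)) t :=
    (Real.hasDerivAt_log hm.ne').comp t ham
  have h := ((hap.mul hlp).add (ham.mul hlm))
  refine HasDerivAt.congr_deriv h ?_
  field_simp
  ring

lemma hasDerivAt_alpha_w {z w : ℝ} (hz : z ∈ Set.Ioo (-1:ℝ) 1) (hw : w ∈ Set.Ioo (-1:ℝ) 1) :
    HasDerivAt (fun w' => alphaKernel z w')
      ((z * (Real.log (1 + z * w) - Real.log (1 - z * w))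
          - (Real.log (1 + w) - Real.log (1 - w))) / (2 * Real.log 2)) w := by
  obtain ⟨hz1, hz2⟩ := hz
  obtain ⟨hw1, hw2⟩ := hw
  have hzw1 : -1 < z * w := by nlinarith
  have hzw2 : z * w < 1 := by nlinarith
  have hmul : HasDerivAt (fun w' : ℝ => z * w') z w := by
    simpa using (hasDerivAt_id w).const_mul z
  have h1 : HasDerivAt (fun w' => Faux (z * w'))
      ((Real.log (1 + z * w) - Real.log (1 - z * w)) * z) w :=
    (hasDerivAt_Faux hzw1 hzw2).comp w hmul
  have h2 : HasDerivAt (fun w' => Faux w') (Real.log (1 + w) - Real.log (1 - w)) w :=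
    hasDerivAt_Faux hw1 hw2
  have h3 : HasDerivAt (fun w' => 1 + (Faux (z * w') - Faux z - Faux w') / (2 * Real.log 2))
      (((Real.log (1 + z * w) - Real.log (1 - z * w)) * z
          - (Real.log (1 + w) - Real.log (1 - w))) / (2 * Real.log 2)) w := by
    exact (((h1.sub_const (Faux z)).sub h2).div_const (2 * Real.log 2)).const_add 1
  have heq : (fun w' => alphaKernel z w')
      =ᶠ[nhds w] (fun w' => 1 + (Faux (z * w') - Faux z - Faux w') / (2 * Real.log 2)) := by
    filter_upwards [Ioo_mem_nhds hw1 hw2] with w' hw'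
    exact alpha_eq ⟨hz1, hz2⟩ hw'
  have := h3.congr_of_eventuallyEq heq
  refine this.congr_deriv ?_
  ring

/-- For `z, w ∈ (−1, 1)` the mixed second partial derivative `∂²α/∂z∂w`
(the `z`-derivative of the `w`-partial) equals
`(1/ln 2)·((1/2)·ln((1 + wz)/(1 − wz)) + wz/(1 − w²z²))`,
and this expression is nonnegative for `z, w ∈ [0, 1)`. -/
theorem alphaKernel_mixed_deriv :
    (∀ z ∈ Set.Ioo (-1 : ℝ) 1, ∀ w ∈ Set.Ioo (-1 : ℝ) 1,
      HasDerivAt (fun z' => deriv (fun w' => alphaKernel z' w') w)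
        ((1 / Real.log 2)
          * ((1 / 2) * Real.log ((1 + w * z) / (1 - w * z))
              + w * z / (1 - w ^ 2 * z ^ 2))) z)
    ∧
    (∀ z ∈ Set.Ico (0 : ℝ) 1, ∀ w ∈ Set.Ico (0 : ℝ) 1,
      0 ≤ (1 / Real.log 2)
          * ((1 / 2) * Real.log ((1 + w * z) / (1 - w * z))
              + w * z / (1 - w ^ 2 * z ^ 2))) := by
  constructor
  · intro z hz w hw
    obtain ⟨hz1, hz2⟩ := hz
    obtain ⟨hw1, hw2⟩ := hw
    have hzw1 : -1 < z * w := by nlinarith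
    have hzw2 : z * w < 1 := by nlinarith
    have hp : (0:ℝ) < 1 + z * w := by linarith
    have hm : (0:ℝ) < 1 - z * w := by linarith
    have hlog2 : (0:ℝ) < Real.log 2 := Real.log_pos one_lt_two
    -- derivative of z' ↦ G z' w at z
    have hmul : HasDerivAt (fun z' : ℝ => z' * w) w z := by
      simpa using (hasDerivAt_id z).mul_const w
    have hlp : HasDerivAt (fun z' : ℝ => Real.log (1 + z' * w)) ((1 + z * w)⁻¹ * w) z := by
    -- log(1 + z'*w)
      exact (Real.hasDerivAt_log hp.ne').comp z ((hmul).const_add 1)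
    have hlm : HasDerivAt (fun z' : ℝ => Real.log (1 - z' * w)) ((1 - z * w)⁻¹ * (-w)) z := by
      have : HasDerivAt (fun z' : ℝ => 1 - z' * w) (-w) z := by
        simpa using hmul.const_sub 1
      exact (Real.hasDerivAt_log hm.ne').comp z this
    have hmain : HasDerivAt (fun z' : ℝ =>
        (z' * (Real.log (1 + z' * w) - Real.log (1 - z' * w))
          - (Real.log (1 + w) - Real.log (1 - w))) / (2 * Real.log 2))
        ((1 * (Real.log (1 + z * w) - Real.log (1 - z * w))
          + z * ((1 + z * w)⁻¹ * w - (1 - z * w)⁻¹ * (-w)))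
          / (2 * Real.log 2)) z := by
      exact (((hasDerivAt_id z).mul (hlp.sub hlm)).sub_const
        (Real.log (1 + w) - Real.log (1 - w))).div_const (2 * Real.log 2)
    have heq : (fun z' => deriv (fun w' => alphaKernel z' w') w)
        =ᶠ[nhds z] (fun z' =>
          (z' * (Real.log (1 + z' * w) - Real.log (1 - z' * w))
            - (Real.log (1 + w) - Real.log (1 - w))) / (2 * Real.log 2)) := by
      filter_upwards [Ioo_mem_nhds hz1 hz2] with z' hz'
      exact (hasDerivAt_alpha_w hz' ⟨hw1, hw2⟩).deriv
    have := hmain.congr_of_eventuallyEq heq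
    refine this.congr_deriv ?_
    rw [mul_comm w z, Real.log_div hp.ne' hm.ne']
    have hne : (1:ℝ) - w ^ 2 * z ^ 2 ≠ 0 := by nlinarith
    have hne' : (1:ℝ) - z ^ 2 * w ^ 2 ≠ 0 := by nlinarith
    field_simp
    ring
  · intro z hz w hw
    obtain ⟨hz1, hz2⟩ := hz
    obtain ⟨hw1, hw2⟩ := hw
    have hwz1 : 0 ≤ w * z := mul_nonneg hw1 hz1
    have hwz2 : w * z < 1 := by nlinarith
    have hm : (0:ℝ) < 1 - w * z := by linarith
    have hlog2 : (0:ℝ) < Real.log 2 := Real.log_pos one_lt_two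
    have h1 : 0 ≤ Real.log ((1 + w * z) / (1 - w * z)) := by
      apply Real.log_nonneg
      rw [le_div_iff₀ hm]; linarith
    have h2 : 0 ≤ w * z / (1 - w ^ 2 * z ^ 2) := by
      apply div_nonneg hwz1
      nlinarith
    positivity
end

section
/- Let U₁, …, U_k be independent random variables, each taking values in [0, 1]. Then E[ √(1 − ∏_{j=1}^k (1 − U_j²)) ] ≥ √(1 − ∏_{j=1}^k (1 − (E U_j)²)). -/
open MeasureTheory ProbabilityTheory

private lemma bcnb_integrable_of_ae_bdd {α : Type*} [MeasurableSpace α] {μ : Measure α}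
    [IsFiniteMeasure μ] {f : α → ℝ} (hf : AEStronglyMeasurable f μ) {C : ℝ}
    (h : ∀ᵐ x ∂μ, |f x| ≤ C) : Integrable f μ :=
  ⟨hf, HasFiniteIntegral.of_bounded (by simpa [Real.norm_eq_abs] using h)⟩

/-- One-variable Jensen-type inequality: for a probability measure on `[0,1]` and
`a, b ≥ 0`, `√(a + b m²) ≤ ∫ √(a + b x²)` where `m` is the mean. -/
private lemma bcnb_sqrt_jensen {ρ : Measure ℝ} [IsProbabilityMeasure ρ]
    (h01 : ∀ᵐ x ∂ρ, x ∈ Set.Icc (0 : ℝ) 1) {a b : ℝ} (ha : 0 ≤ a) (hb : 0 ≤ b) :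
    Real.sqrt (a + b * (∫ x, x ∂ρ) ^ 2) ≤ ∫ x, Real.sqrt (a + b * x ^ 2) ∂ρ := by
  set m := ∫ x, x ∂ρ with hm
  have hid : Integrable (fun x : ℝ => x) ρ := by
    refine bcnb_integrable_of_ae_bdd aestronglyMeasurable_id (C := 1) ?_
    filter_upwards [h01] with x hx
    rw [abs_le]; exact ⟨by linarith [hx.1], hx.2⟩
  have hm0 : 0 ≤ m :=
    integral_nonneg_of_ae (by filter_upwards [h01] with x hx using hx.1)
  have hmeasf : Measurable fun x : ℝ => Real.sqrt (a + b * x ^ 2) :=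
    Real.continuous_sqrt.measurable.comp (by fun_prop)
  have hintf : Integrable (fun x => Real.sqrt (a + b * x ^ 2)) ρ := by
    refine bcnb_integrable_of_ae_bdd hmeasf.aestronglyMeasurable
      (C := Real.sqrt (a + b)) ?_
    filter_upwards [h01] with x hx
    rw [abs_of_nonneg (Real.sqrt_nonneg _)]
    apply Real.sqrt_le_sqrt
    have hx2 : x ^ 2 ≤ 1 := by nlinarith [hx.1, hx.2]
    nlinarith
  rcases le_or_gt (a + b * m ^ 2) 0 with h0 | h0
  · rw [Real.sqrt_eq_zero'.mpr h0]
    exact integral_nonneg fun x => Real.sqrt_nonneg _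
  · set s := Real.sqrt (a + b * m ^ 2) with hs
    have hspos : 0 < s := Real.sqrt_pos.mpr h0
    have hpt : ∀ᵐ x ∂ρ, (a + b * m * x) / s ≤ Real.sqrt (a + b * x ^ 2) := by
      filter_upwards [h01] with x hx
      rw [div_le_iff₀ hspos]
      have hx0 := hx.1
      have h2 : 0 ≤ a + b * m * x := by positivity
      have hax : 0 ≤ a + b * x ^ 2 := by positivity
      calc a + b * m * x ≤ Real.sqrt ((a + b * x ^ 2) * (a + b * m ^ 2)) := by
            rw [Real.le_sqrt h2 (by positivity)]
            nlinarith [mul_nonneg (mul_nonneg ha hb) (sq_nonneg (x - m))]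
        _ = Real.sqrt (a + b * x ^ 2) * s := Real.sqrt_mul hax _
    have hlin : Integrable (fun x : ℝ => (a + b * m * x) / s) ρ := by
      have : Integrable (fun x : ℝ => a + b * m * x) ρ :=
        (integrable_const a).add (hid.const_mul (b * m))
      exact this.div_const s
    have hint_eq : ∫ x, (a + b * m * x) / s ∂ρ = (a + b * m ^ 2) / s := by
      rw [integral_div]
      congr 1
      rw [integral_add (integrable_const a) (hid.const_mul (b * m)),
        integral_const, integral_const_mul]
      simp only [← hm, measure_univ, probReal_univ, ENNReal.toReal_one, smul_eq_mul, one_mul]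
      ring
    calc s = (a + b * m ^ 2) / s := by rw [hs, Real.div_sqrt]
      _ = ∫ x, (a + b * m * x) / s ∂ρ := hint_eq.symm
      _ ≤ ∫ x, Real.sqrt (a + b * x ^ 2) ∂ρ := integral_mono_ae hlin hintf hpt

/-- Restriction of an independent family along `Fin.castSucc`. -/
private lemma bcnb_iIndepFun_castSucc {Ω : Type*} [MeasurableSpace Ω] {μ : Measure Ω} {k : ℕ}
    {U : Fin (k + 1) → Ω → ℝ} (h : iIndepFun U μ) :
    iIndepFun (fun j : Fin k => U j.castSucc) μ := by
  classical
  rw [iIndepFun_iff_measure_inter_preimage_eq_mul] at h ⊢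
  intro S sets hsets
  set sets' : Fin (k + 1) → Set ℝ := fun i =>
    if hi : i = Fin.last k then Set.univ else sets (i.castPred hi)
  have h1 : ∀ j : Fin k, sets' j.castSucc = sets j := by
    intro j
    have : (j.castSucc : Fin (k + 1)) ≠ Fin.last k := (Fin.castSucc_lt_last j).ne
    simp [sets', this]
  have key := h (S.image Fin.castSucc) (sets := sets') ?_
  · rw [Finset.prod_image (fun a _ b _ hab => Fin.castSucc_injective k hab)] at key
    have hset : (⋂ i ∈ S.image Fin.castSucc, U i ⁻¹' sets' i)
        = ⋂ j ∈ S, U j.castSucc ⁻¹' sets j := by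
      ext ω
      simp only [Set.mem_iInter, Finset.mem_image]
      constructor
      · intro hw j hj
        have := hw j.castSucc ⟨j, hj, rfl⟩
        rwa [h1] at this
      · rintro hw i ⟨j, hj, rfl⟩
        rw [h1]; exact hw j hj
    rw [hset] at key
    rw [key]
    exact Finset.prod_congr rfl fun j _ => by rw [h1]
  · intro i hi
    by_cases hil : i = Fin.last k
    · simp [sets', hil]
    · simp only [sets', dif_neg hil]
      obtain ⟨j, hj, rfl⟩ := Finset.mem_image.mp hi
      have hjl : (j.castSucc : Fin (k + 1)) ≠ Fin.last k := (Fin.castSucc_lt_last j).ne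
      have : (Fin.castSucc j).castPred hil = j := by simp
      rw [this]
      exact hsets j hj

/-- Main induction: the strengthened bound with an extra constant `c ∈ [0,1]`. -/
private lemma bcnb_main_aux {Ω : Type*} [MeasurableSpace Ω] (μ : Measure Ω)
    [IsProbabilityMeasure μ] :
    ∀ (k : ℕ) (U : Fin k → Ω → ℝ), (∀ j, Measurable (U j)) →
      (∀ j ω, U j ω ∈ Set.Icc (0 : ℝ) 1) →
      iIndepFun U μ →
      ∀ c : ℝ, 0 ≤ c → c ≤ 1 →
      Real.sqrt (1 - c * ∏ j, (1 - (∫ ω, U j ω ∂μ) ^ 2))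
        ≤ ∫ ω, Real.sqrt (1 - c * ∏ j, (1 - (U j ω) ^ 2)) ∂μ := by
  intro k
  induction k with
  | zero =>
    intro U _ _ _ c _ _
    simp
  | succ k ih =>
    intro U hmeas hval hindep c hc0 hc1
    classical
    set X : Ω → ℝ := U (Fin.last k) with hX
    set m := ∫ ω, X ω ∂μ with hmdef
    have hXval : ∀ ω, X ω ∈ Set.Icc (0 : ℝ) 1 := hval _
    have hXmeas : Measurable X := hmeas _
    have hXint : Integrable X μ := by
      refine bcnb_integrable_of_ae_bdd hXmeas.aestronglyMeasurable (C := 1) ?_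
      exact ae_of_all _ fun ω => abs_le.mpr ⟨by linarith [(hXval ω).1], (hXval ω).2⟩
    have hm0 : 0 ≤ m := integral_nonneg fun ω => (hXval ω).1
    have hm1 : m ≤ 1 := by
      have := integral_mono hXint (integrable_const 1) (fun ω => (hXval ω).2)
      simpa using this
    set V : Fin k → Ω → ℝ := fun j => U j.castSucc with hV
    set Y : Ω → ℝ := fun ω => ∏ j, (1 - (V j ω) ^ 2) with hY
    have hVmeas : ∀ j, Measurable (V j) := fun j => hmeas _
    have hVval : ∀ j ω, V j ω ∈ Set.Icc (0 : ℝ) 1 := fun j ω => hval _ ω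
    have hYmeas : Measurable Y := by
      apply Finset.measurable_prod
      intro j _
      exact (measurable_const.sub ((hVmeas j).pow_const 2))
    have hY01 : ∀ ω, Y ω ∈ Set.Icc (0 : ℝ) 1 := by
      intro ω
      constructor
      · apply Finset.prod_nonneg
        intro j _
        nlinarith [(hVval j ω).1, (hVval j ω).2]
      · apply Finset.prod_le_one
        · intro j _; nlinarith [(hVval j ω).1, (hVval j ω).2]
        · intro j _; nlinarith [(hVval j ω).1, (hVval j ω).2]
    -- Independence of X and Y
    have hXY : IndepFun X Y μ := by
      have hdisj : Disjoint ({Fin.last k} : Finset (Fin (k + 1)))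
          (Finset.univ.image Fin.castSucc) := by
        rw [Finset.disjoint_left]
        intro i hi hi'
        rw [Finset.mem_singleton] at hi
        obtain ⟨j, _, hj⟩ := Finset.mem_image.mp hi'
        rw [hi] at hj
        exact (Fin.castSucc_lt_last j).ne hj
      have h := hindep.indepFun_finset {Fin.last k} (Finset.univ.image Fin.castSucc)
        hdisj hmeas
      have hφ : Measurable fun v : (({Fin.last k} : Finset (Fin (k + 1))) : Type) → ℝ =>
          v ⟨Fin.last k, Finset.mem_singleton_self _⟩ := measurable_pi_apply _
      have hψ : Measurable fun v : ((Finset.univ.image Fin.castSucc :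
            Finset (Fin (k + 1))) : Type) → ℝ => ∏ i, (1 - (v i) ^ 2) := by
        apply Finset.measurable_prod
        intro i _
        exact measurable_const.sub ((measurable_pi_apply i).pow_const 2)
      have h2 := h.comp hφ hψ
      have heq : (fun v : ((Finset.univ.image Fin.castSucc :
            Finset (Fin (k + 1))) : Type) → ℝ => ∏ i, (1 - (v i) ^ 2)) ∘
            (fun a (i : (Finset.univ.image Fin.castSucc : Finset (Fin (k + 1)))) => U i a)
          = Y := by
        funext ω
        show ∏ i : (Finset.univ.image Fin.castSucc : Finset (Fin (k + 1))),
            (1 - (U i ω) ^ 2) = Y ω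
        rw [Finset.prod_coe_sort (f := fun i => (1 - (U i ω) ^ 2)),
          Finset.prod_image (fun a _ b _ hab => Fin.castSucc_injective k hab)]
      rw [heq] at h2
      exact h2
    set ρ : Measure ℝ := μ.map X with hρ
    set σ : Measure ℝ := μ.map Y with hσ
    haveI : IsProbabilityMeasure ρ := Measure.isProbabilityMeasure_map hXmeas.aemeasurable
    haveI : IsProbabilityMeasure σ := Measure.isProbabilityMeasure_map hYmeas.aemeasurable
    have hρ01 : ∀ᵐ x ∂ρ, x ∈ Set.Icc (0 : ℝ) 1 := by
      rw [hρ]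
      exact (ae_map_iff hXmeas.aemeasurable measurableSet_Icc).mpr (ae_of_all _ hXval)
    have hσ01 : ∀ᵐ y ∂σ, y ∈ Set.Icc (0 : ℝ) 1 := by
      rw [hσ]
      exact (ae_map_iff hYmeas.aemeasurable measurableSet_Icc).mpr (ae_of_all _ hY01)
    have hmρ : ∫ x, x ∂ρ = m := by
      rw [hρ, hmdef]
      exact integral_map hXmeas.aemeasurable aestronglyMeasurable_id
    have hmap : μ.map (fun ω => (X ω, Y ω)) = ρ.prod σ :=
      (indepFun_iff_map_prod_eq_prod_map_map hXmeas.aemeasurable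
        hYmeas.aemeasurable).mp hXY
    set F : ℝ × ℝ → ℝ := fun p => Real.sqrt (1 - c * ((1 - p.1 ^ 2) * p.2)) with hF
    have hFmeas : Measurable F := by
      apply Real.continuous_sqrt.measurable.comp
      fun_prop
    have haeprod : ∀ᵐ p ∂ρ.prod σ, p.1 ∈ Set.Icc (0 : ℝ) 1 ∧ p.2 ∈ Set.Icc (0 : ℝ) 1 := by
      rw [Measure.ae_prod_iff_ae_ae]
      · filter_upwards [hρ01] with x hx
        filter_upwards [hσ01] with y hy
        exact ⟨hx, hy⟩
      · exact (measurableSet_Icc.preimage measurable_fst).inter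
          (measurableSet_Icc.preimage measurable_snd)
    have hFint : Integrable F (ρ.prod σ) := by
      refine bcnb_integrable_of_ae_bdd hFmeas.aestronglyMeasurable (C := 1) ?_
      filter_upwards [haeprod] with p hp
      rw [abs_of_nonneg (Real.sqrt_nonneg _)]
      have h1 : 0 ≤ c * ((1 - p.1 ^ 2) * p.2) := by
        have := hp.1.1; have := hp.1.2; have := hp.2.1
        have h2 : (0:ℝ) ≤ 1 - p.1 ^ 2 := by nlinarith
        positivity
      calc Real.sqrt (1 - c * ((1 - p.1 ^ 2) * p.2)) ≤ Real.sqrt 1 :=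
            Real.sqrt_le_sqrt (by linarith)
        _ = 1 := Real.sqrt_one
    -- the pointwise comparison function for the outer integral
    set G : ℝ → ℝ := fun y => Real.sqrt (1 - c * (1 - m ^ 2) * y) with hG
    have hGmeas : Measurable G := Real.continuous_sqrt.measurable.comp (by fun_prop)
    have hm2 : m ^ 2 ≤ 1 := by nlinarith [hm0, hm1]
    have hc' : 0 ≤ c * (1 - m ^ 2) := mul_nonneg hc0 (by linarith)
    have hc'1 : c * (1 - m ^ 2) ≤ 1 := by nlinarith [hm2, hc0, hc1]
    have hGint : Integrable G σ := by
      refine bcnb_integrable_of_ae_bdd hGmeas.aestronglyMeasurable (C := 1) ?_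
      filter_upwards [hσ01] with y hy
      rw [abs_of_nonneg (Real.sqrt_nonneg _)]
      have : 0 ≤ c * (1 - m ^ 2) * y := mul_nonneg hc' hy.1
      calc Real.sqrt (1 - c * (1 - m ^ 2) * y) ≤ Real.sqrt 1 :=
            Real.sqrt_le_sqrt (by linarith)
        _ = 1 := Real.sqrt_one
    -- inner bound : for a.e. y, G y ≤ ∫ x, F (x, y) ∂ρ
    have hinner : ∀ᵐ y ∂σ, G y ≤ ∫ x, F (x, y) ∂ρ := by
      filter_upwards [hσ01] with y hy
      have hay : 0 ≤ 1 - c * y := by nlinarith [hy.1, hy.2]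
      have hby : 0 ≤ c * y := mul_nonneg hc0 hy.1
      have := bcnb_sqrt_jensen hρ01 hay hby
      rw [hmρ] at this
      have hL : Real.sqrt (1 - c * y + c * y * m ^ 2)
          = Real.sqrt (1 - c * (1 - m ^ 2) * y) := by ring_nf
      have hR : (fun x => Real.sqrt (1 - c * y + c * y * x ^ 2))
          = fun x => F (x, y) := by
        funext x; rw [hF]; ring_nf
      rw [hL, hR] at this
      exact this
    -- chain of (in)equalities
    have hstep1 : ∫ ω, Real.sqrt (1 - c * ∏ j, (1 - (U j ω) ^ 2)) ∂μ
        = ∫ ω, F (X ω, Y ω) ∂μ := by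
      apply integral_congr_ae
      apply ae_of_all
      intro ω
      have hprod : (∏ j : Fin (k + 1), (1 - (U j ω) ^ 2))
          = (1 - (X ω) ^ 2) * Y ω := by
        rw [Fin.prod_univ_castSucc, hY, mul_comm]
      show Real.sqrt (1 - c * ∏ j : Fin (k + 1), (1 - (U j ω) ^ 2))
          = Real.sqrt (1 - c * ((1 - (X ω) ^ 2) * Y ω))
      rw [hprod]
    have hstep2 : ∫ ω, F (X ω, Y ω) ∂μ = ∫ p, F p ∂(ρ.prod σ) := by
      rw [← hmap, integral_map (hXmeas.prodMk hYmeas).aemeasurable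
        hFmeas.aestronglyMeasurable]
    have hstep3 : ∫ p, F p ∂(ρ.prod σ) = ∫ y, ∫ x, F (x, y) ∂ρ ∂σ :=
      integral_prod_symm F hFint
    have hstep4 : ∫ y, G y ∂σ ≤ ∫ y, ∫ x, F (x, y) ∂ρ ∂σ :=
      integral_mono_ae hGint hFint.integral_prod_right hinner
    have hstep5 : ∫ y, G y ∂σ = ∫ ω, G (Y ω) ∂μ := by
      rw [hσ, integral_map hYmeas.aemeasurable hGmeas.aestronglyMeasurable]
    have hIH := ih V hVmeas hVval (bcnb_iIndepFun_castSucc hindep)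
      (c * (1 - m ^ 2)) hc' hc'1
    have hstep6 : Real.sqrt (1 - c * (1 - m ^ 2) * ∏ j, (1 - (∫ ω, V j ω ∂μ) ^ 2))
        ≤ ∫ ω, G (Y ω) ∂μ := by
      have heq : (fun ω => G (Y ω))
          = fun ω => Real.sqrt (1 - c * (1 - m ^ 2) * ∏ j, (1 - (V j ω) ^ 2)) := by
        funext ω; rw [hG, hY]
      rw [heq]
      simpa [mul_assoc] using hIH
    have hfinal : Real.sqrt (1 - c * ∏ j : Fin (k + 1), (1 - (∫ ω, U j ω ∂μ) ^ 2))
        = Real.sqrt (1 - c * (1 - m ^ 2) * ∏ j, (1 - (∫ ω, V j ω ∂μ) ^ 2)) := by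
      congr 1
      rw [Fin.prod_univ_castSucc]
      rw [hmdef, hX]
      simp only [hV]
      ring_nf
    calc Real.sqrt (1 - c * ∏ j : Fin (k + 1), (1 - (∫ ω, U j ω ∂μ) ^ 2))
        = Real.sqrt (1 - c * (1 - m ^ 2) * ∏ j, (1 - (∫ ω, V j ω ∂μ) ^ 2)) := hfinal
      _ ≤ ∫ ω, G (Y ω) ∂μ := hstep6
      _ = ∫ y, G y ∂σ := hstep5.symm
      _ ≤ ∫ y, ∫ x, F (x, y) ∂ρ ∂σ := hstep4
      _ = ∫ p, F p ∂(ρ.prod σ) := hstep3.symm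
      _ = ∫ ω, F (X ω, Y ω) ∂μ := hstep2.symm
      _ = ∫ ω, Real.sqrt (1 - c * ∏ j, (1 - (U j ω) ^ 2)) ∂μ := hstep1.symm

/-- For independent random variables `U₁, …, U_k` with values in `[0, 1]`,
`E[√(1 − ∏ⱼ (1 − Uⱼ²))] ≥ √(1 − ∏ⱼ (1 − (E Uⱼ)²))`. -/
theorem battacharyya_check_node_bound
    {Ω : Type*} [MeasurableSpace Ω] (μ : Measure Ω) [IsProbabilityMeasure μ]
    (k : ℕ) (U : Fin k → Ω → ℝ)
    (hmeas : ∀ j, Measurable (U j))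
    (hval : ∀ j ω, U j ω ∈ Set.Icc (0 : ℝ) 1)
    (hindep : iIndepFun U μ) :
    Real.sqrt (1 - ∏ j : Fin k, (1 - (∫ ω, U j ω ∂μ) ^ 2))
      ≤ ∫ ω, Real.sqrt (1 - ∏ j : Fin k, (1 - (U j ω) ^ 2)) ∂μ := by
  have := bcnb_main_aux μ k U hmeas hval hindep 1 zero_le_one le_rfl
  simpa using this
end

section
/- Let μ be a probability measure on ℝ satisfying the symmetry condition that the pushforward of μ under x ↦ −x equals μ weighted by the density x ↦ e^{−x} (equivalently, ∫ f(−x) dμ(x) = ∫ e^{−x} f(x) dμ(x) for all bounded measurable f). Then ∫ tanh(x/2) dμ(x) = ∫ tanh(x/2)² dμ(x). -/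
open scoped ENNReal NNReal


open MeasureTheory

lemma tanh_half_eq (x : ℝ) :
    Real.tanh (x / 2) = (Real.exp x - 1) / (Real.exp x + 1) := by
  rw [Real.tanh_eq_sinh_div_cosh, Real.sinh_eq, Real.cosh_eq]
  have h1 : Real.exp (x / 2) * Real.exp (x / 2) = Real.exp x := by
    rw [← Real.exp_add]; ring_nf
  have h2 : Real.exp (x / 2) ≠ 0 := Real.exp_ne_zero _
  have h3 : Real.exp (x / 2) + Real.exp (-(x / 2)) > 0 :=
    add_pos (Real.exp_pos _) (Real.exp_pos _)
  have h4 : Real.exp x + 1 > 0 := by positivity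
  rw [Real.exp_neg, ← h1]
  have h5 : Real.exp (x / 2) + (Real.exp (x / 2))⁻¹ ≠ 0 := by positivity
  have h6 : Real.exp (x / 2) * Real.exp (x / 2) + 1 ≠ 0 := by positivity
  field_simp

lemma abs_tanh_le (y : ℝ) : |Real.tanh y| ≤ 1 := by
  have := tanh_half_eq (2 * y)
  have h2 : 2 * y / 2 = y := by ring
  rw [h2] at this
  rw [this]
  have he : Real.exp (2 * y) > 0 := Real.exp_pos _
  rw [abs_div, abs_of_pos (by linarith : Real.exp (2 * y) + 1 > 0),
    div_le_one (by linarith)]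
  rw [abs_le]; constructor <;> linarith

/-- Key symmetry consequence: for continuous `f` bounded by 1,
`∫ f(-x) dμ = ∫ e^{-x} f(x) dμ`, and the RHS integrand is integrable. -/
lemma key_sym (μ : Measure ℝ) [IsProbabilityMeasure μ]
    (hsym : Measure.map (fun x : ℝ => -x) μ
      = μ.withDensity (fun x => ENNReal.ofReal (Real.exp (-x))))
    (f : ℝ → ℝ) (hf : Continuous f) (hb : ∀ x, |f x| ≤ 1) :
    (∫ x, f (-x) ∂μ = ∫ x, Real.exp (-x) * f x ∂μ) ∧
      Integrable (fun x => Real.exp (-x) * f x) μ := by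
  have hdens : (fun x : ℝ => ENNReal.ofReal (Real.exp (-x)))
      = fun x : ℝ => ((Real.exp (-x)).toNNReal : ℝ≥0∞) := by
    funext x; rfl
  have hmeas : Measurable (fun x : ℝ => (Real.exp (-x)).toNNReal) :=
    (Real.continuous_exp.comp continuous_neg).measurable.real_toNNReal
  -- integrability of f w.r.t. the withDensity measure
  have hprob : IsProbabilityMeasure (Measure.map (fun x : ℝ => -x) μ) :=
    Measure.isProbabilityMeasure_map measurable_neg.aemeasurable
  rw [hsym] at hprob
  have hint : Integrable f (μ.withDensity (fun x => ENNReal.ofReal (Real.exp (-x)))) := by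
    apply Integrable.mono' (integrable_const (1 : ℝ)) hf.aestronglyMeasurable
    filter_upwards with x
    simpa using hb x
  have hsmul : ∀ x : ℝ, (Real.exp (-x)).toNNReal • f x = Real.exp (-x) * f x := by
    intro x
    rw [NNReal.smul_def, Real.coe_toNNReal _ (Real.exp_nonneg _), smul_eq_mul]
  constructor
  · have hmap : ∫ y, f y ∂(Measure.map (fun x : ℝ => -x) μ) = ∫ x, f (-x) ∂μ :=
      integral_map measurable_neg.aemeasurable hf.aestronglyMeasurable
    rw [hsym, hdens, integral_withDensity_eq_integral_smul hmeas] at hmap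
    rw [← hmap]
    exact integral_congr_ae (Filter.Eventually.of_forall hsmul)
  · rw [hdens] at hint
    have := (integrable_withDensity_iff_integrable_smul hmeas).mp hint
    exact this.congr (Filter.Eventually.of_forall hsmul)

/-- For a symmetric `L`-density `μ` (a probability measure on `ℝ` whose pushforward
under `x ↦ −x` equals `μ` weighted by the density `x ↦ e^{−x}`),
`∫ tanh(x/2) dμ = ∫ tanh(x/2)² dμ`. -/
theorem integral_tanh_eq_integral_tanh_sq_of_symmetric
    (μ : Measure ℝ) [IsProbabilityMeasure μ]
    (hsym : Measure.map (fun x : ℝ => -x) μ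
      = μ.withDensity (fun x => ENNReal.ofReal (Real.exp (-x)))) :
    ∫ x, Real.tanh (x / 2) ∂μ = ∫ x, Real.tanh (x / 2) ^ 2 ∂μ := by
  set t : ℝ → ℝ := fun x => Real.tanh (x / 2) with ht
  have hteq : t = fun x => (Real.exp x - 1) / (Real.exp x + 1) := funext tanh_half_eq
  have hct : Continuous t := by
    rw [hteq]
    exact (Real.continuous_exp.sub continuous_const).div
      (Real.continuous_exp.add continuous_const) (fun x => by positivity)
  have hbt : ∀ x, |t x| ≤ 1 := fun x => abs_tanh_le _
  have hbt2 : ∀ x, |t x ^ 2| ≤ 1 := by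
    intro x
    rw [abs_pow]
    exact pow_le_one₀ (abs_nonneg _) (hbt x)
  obtain ⟨h1, hi1⟩ := key_sym μ hsym t hct hbt
  obtain ⟨h2, hi2⟩ := key_sym μ hsym (fun x => t x ^ 2) (hct.pow 2) hbt2
  -- t is odd, t² is even
  have hodd : ∀ x : ℝ, t (-x) = - t x := by
    intro x
    simp only [ht]
    rw [neg_div, Real.tanh_neg]
  have h1' : (∫ x, t x ∂μ) = - ∫ x, Real.exp (-x) * t x ∂μ := by
    rw [← h1]
    rw [← integral_neg]
    exact integral_congr_ae (Filter.Eventually.of_forall fun x => by simp only [hodd, neg_neg])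
  have h2' : (∫ x, t x ^ 2 ∂μ) = ∫ x, Real.exp (-x) * t x ^ 2 ∂μ := by
    rw [← h2]
    exact integral_congr_ae (Filter.Eventually.of_forall fun x => by simp only [hodd, neg_neg]; ring)
  -- pointwise identity : e^{-x} (t + t²) = t (1 - t)
  have hpt : ∀ x : ℝ, Real.exp (-x) * t x + Real.exp (-x) * t x ^ 2
      = t x - t x ^ 2 := by
    intro x
    have hx := tanh_half_eq x
    have hE : Real.exp (-x) * Real.exp x = 1 := by rw [← Real.exp_add]; simp
    have h4 : Real.exp x + 1 > 0 := by positivity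
    simp only [ht]
    rw [hx]
    field_simp
    nlinarith [hE]
  -- integrate the pointwise identity
  have hit : Integrable t μ := by
    apply Integrable.mono' (integrable_const (1 : ℝ)) hct.aestronglyMeasurable
    filter_upwards with x; simpa using hbt x
  have hit2 : Integrable (fun x => t x ^ 2) μ := by
    apply Integrable.mono' (integrable_const (1 : ℝ)) (hct.pow 2).aestronglyMeasurable
    filter_upwards with x; simpa using hbt2 x
  have hsum : (∫ x, Real.exp (-x) * t x ∂μ) + (∫ x, Real.exp (-x) * t x ^ 2 ∂μ)
      = (∫ x, t x ∂μ) - (∫ x, t x ^ 2 ∂μ) := by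
    rw [← integral_add hi1 hi2, ← integral_sub hit hit2]
    exact integral_congr_ae (Filter.Eventually.of_forall hpt)
  have := h1'
  have := h2'
  linarith [hsum, h1', h2']
end
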